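/- For stars K_{1,r} and K_{1,s} with s ≥ r ≥ 2, the edge open packing number of their Cartesian product equals rs: ρ_e^o(K_{1,r} □ K_{1,s}) = rs. -/

import Mathlib

open SimpleGraph

/-- An edge open packing (EOP) set: a set `B` of edges of `G` such that no edge of `G`
(other than the two edges themselves) joins an endvertex of one edge of `B` to an
endvertex of another edge of `B`. -/
def IsEOPSet {V : Type*} (G : SimpleGraph V) (B : Set (Sym2 V)) : Prop :=
  B ⊆ G.edgeSet ∧ ∀ e₁ ∈ B, ∀ e₂ ∈ B, e₁ ≠ e₂ →
    ∀ x ∈ e₁, ∀ y ∈ e₂, G.Adj x y → s(x, y) = e₁ ∨ s(x, y) = e₂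

/-- An induced matching: a set `M` of edges of `G` such that no edge of `G` joins an
endvertex of one edge of `M` to an endvertex of another edge of `M` (this in particular
forces `M` to be a matching). -/
def IsInducedMatching {V : Type*} (G : SimpleGraph V) (M : Set (Sym2 V)) : Prop :=
  M ⊆ G.edgeSet ∧ ∀ e₁ ∈ M, ∀ e₂ ∈ M, e₁ ≠ e₂ →
    ∀ x ∈ e₁, ∀ y ∈ e₂, ¬ G.Adj x y

/-- The edge open packing number `ρₑᵒ(G)`. -/
noncomputable def eopNum {V : Type*} (G : SimpleGraph V) : ℕ :=
  sSup {n | ∃ B : Finset (Sym2 V), IsEOPSet G ↑B ∧ B.card = n}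

/-- The induced matching number `ν_I(G)`. -/
noncomputable def inducedMatchingNum {V : Type*} (G : SimpleGraph V) : ℕ :=
  sSup {n | ∃ M : Finset (Sym2 V), IsInducedMatching G ↑M ∧ M.card = n}

/-- The independence number `α(G)`. -/
noncomputable def indepNum {V : Type*} (G : SimpleGraph V) : ℕ :=
  sSup {n | ∃ S : Finset V, (∀ x ∈ S, ∀ y ∈ S, ¬ G.Adj x y) ∧ S.card = n}

/-- The open packing number `ρᵒ(G)`: maximum size of a set of vertices whose open
neighborhoods are pairwise disjoint. -/
noncomputable def openPackNum {V : Type*} (G : SimpleGraph V) : ℕ :=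
  sSup {n | ∃ P : Finset V,
    (∀ x ∈ P, ∀ y ∈ P, x ≠ y → ∀ z, ¬ (G.Adj x z ∧ G.Adj y z)) ∧ P.card = n}

/-- The 2-packing number `ρ₂(G)`: maximum size of a set of vertices pairwise at
distance greater than 2. -/
noncomputable def twoPackNum {V : Type*} (G : SimpleGraph V) : ℕ :=
  sSup {n | ∃ P : Finset V,
    (∀ x ∈ P, ∀ y ∈ P, x ≠ y →
      ¬ G.Adj x y ∧ (∀ z, ¬ (G.Adj x z ∧ G.Adj z y))) ∧ P.card = n}

/-- The 3-packing number `ρ₃(G)`: maximum size of a set of vertices pairwise at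
distance greater than 3. -/
noncomputable def threePackNum {V : Type*} (G : SimpleGraph V) : ℕ :=
  sSup {n | ∃ P : Finset V,
    (∀ x ∈ P, ∀ y ∈ P, x ≠ y →
      ¬ G.Adj x y ∧ (∀ z, ¬ (G.Adj x z ∧ G.Adj z y)) ∧
      (∀ z w, ¬ (G.Adj x z ∧ G.Adj z w ∧ G.Adj w y))) ∧ P.card = n}

/-- Minimum degree of `G` (degrees measured via `Set.ncard` of neighborhoods). -/
noncomputable def minDeg {V : Type*} (G : SimpleGraph V) : ℕ :=
  sInf {d | ∃ v, d = (G.neighborSet v).ncard}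

/-- The lexicographic product `G ∘ H`. -/
def lexProd {V W : Type*} (G : SimpleGraph V) (H : SimpleGraph W) :
    SimpleGraph (V × W) where
  Adj x y := G.Adj x.1 y.1 ∨ (x.1 = y.1 ∧ H.Adj x.2 y.2)
  symm := ⟨by
    rintro ⟨g, h⟩ ⟨g', h'⟩ (hgg | ⟨rfl, hh⟩)
    · exact Or.inl hgg.symm
    · exact Or.inr ⟨rfl, hh.symm⟩⟩
  loopless := ⟨by
    rintro ⟨g, h⟩ (hgg | ⟨-, hh⟩)
    · exact G.ne_of_adj hgg rfl
    · exact H.ne_of_adj hh rfl⟩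

/-- The direct (tensor) product `G × H`. -/
def tensorProd {V W : Type*} (G : SimpleGraph V) (H : SimpleGraph W) :
    SimpleGraph (V × W) where
  Adj x y := G.Adj x.1 y.1 ∧ H.Adj x.2 y.2
  symm := ⟨by rintro ⟨g, h⟩ ⟨g', h'⟩ ⟨h1, h2⟩; exact ⟨h1.symm, h2.symm⟩⟩
  loopless := ⟨by rintro ⟨g, h⟩ ⟨h1, -⟩; exact G.ne_of_adj h1 rfl⟩

/-- The strong product `G ⊠ H`. -/
def strongProd {V W : Type*} (G : SimpleGraph V) (H : SimpleGraph W) :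
    SimpleGraph (V × W) where
  Adj x y := x ≠ y ∧ (x.1 = y.1 ∨ G.Adj x.1 y.1) ∧ (x.2 = y.2 ∨ H.Adj x.2 y.2)
  symm := ⟨by
    rintro x y ⟨hne, h1, h2⟩
    exact ⟨hne.symm, h1.imp Eq.symm (fun h => h.symm), h2.imp Eq.symm (fun h => h.symm)⟩⟩
  loopless := ⟨by rintro x ⟨hne, -, -⟩; exact hne rfl⟩

/-- The star `K_{1,r}` with center `none` and leaves `some i`. -/
def starGraph (r : ℕ) : SimpleGraph (Option (Fin r)) :=
  SimpleGraph.fromRel (fun x _ => x = none)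

/-- The spider `S^k`: obtained from `K_{1,k}` by subdividing every edge exactly once.
The center is `none`, `some (i, false)` are the support vertices and `some (i, true)`
the leaves. -/
def spiderGraph (k : ℕ) : SimpleGraph (Option (Fin k × Bool)) :=
  SimpleGraph.fromRel (fun x y =>
    (x = none ∧ ∃ i, y = some (i, false)) ∨
    (∃ i, x = some (i, false) ∧ y = some (i, true)))

/-- The `n`-dimensional hypercube `Q_n`: vertices are `Fin n → Bool`, adjacent iff they
differ in exactly one coordinate. -/
def hypercube (n : ℕ) : SimpleGraph (Fin n → Bool) :=
  SimpleGraph.fromRel (fun x y =>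
    (Finset.univ.filter (fun i => x i ≠ y i)).card = 1)

/-- The corona product `G ⊙ H`: vertices `(v, none)` form a copy of `G`, vertices
`(v, some h)` form a copy of `H` for each `v`, and `(v, none)` is joined to every
vertex of its copy of `H`. -/
def corona {V W : Type*} (G : SimpleGraph V) (H : SimpleGraph W) :
    SimpleGraph (V × Option W) :=
  SimpleGraph.fromRel (fun x y =>
    (x.2 = none ∧ y.2 = none ∧ G.Adj x.1 y.1) ∨
    (x.1 = y.1 ∧ ∃ h h', x.2 = some h ∧ y.2 = some h' ∧ H.Adj h h') ∨
    (x.1 = y.1 ∧ x.2 = none ∧ ∃ h, y.2 = some h))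

/-- The set of endvertices of the edges of `B`. -/
def supportSet {V : Type*} (B : Set (Sym2 V)) : Set V := {v | ∃ e ∈ B, v ∈ e}

/-!
For the lower bound take, in each of the `r` fibers `{ℓ} □ K_{1,s}` over a leaf `ℓ` of `K_{1,r}`,
the `s` edges at the copy of the centre: edges in different fibers have no edge between them
because the leaves of `K_{1,r}` are independent, and inside one fiber they form a star whose
leaves are independent.

For the upper bound, every edge of `K_{1,r} □ K_{1,s}` either contains the hub (centre, centre)
or ends at a pair of leaves. An edge open packing containing both kinds lies in one star of the
hub plus one fiber, so it has at most `max r s + 1` edges; one without edges of the second kind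
has at most `r + s`; one without hub edges has at most `s` edges in each of the `r` leaf fibers.
For `r, s ≥ 2` all these bounds are at most `r s`.
-/

open Finset

section General

variable {V W : Type*} {G : SimpleGraph V} {H : SimpleGraph W}

theorem IsEOPSet.eq_of_adj {B : Set (Sym2 V)} (hB : IsEOPSet G B) {e₁ e₂ : Sym2 V}
    (h₁ : e₁ ∈ B) (h₂ : e₂ ∈ B) {x y : V} (hx : x ∈ e₁) (hy : y ∈ e₂) (hxy : G.Adj x y)
    (hne₁ : s(x, y) ≠ e₁) (hne₂ : s(x, y) ≠ e₂) : e₁ = e₂ := by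
  by_contra hne
  exact (hB.2 e₁ h₁ e₂ h₂ hne x hx y hy hxy).elim hne₁ hne₂

theorem eopNum_eq_card {B : Finset (Sym2 V)} (hB : IsEOPSet G B)
    (hmax : ∀ B' : Finset (Sym2 V), IsEOPSet G B' → B'.card ≤ B.card) : eopNum G = B.card :=
  IsGreatest.csSup_eq ⟨⟨B, hB, rfl⟩, by rintro _ ⟨B', hB', rfl⟩; exact hmax B' hB'⟩

variable [DecidableEq V] [DecidableEq W]

def fiberStars (S : Finset V) (c : W) (N : Finset W) : Finset (Sym2 (V × W)) :=
  (S ×ˢ N).image fun p => s((p.1, c), p)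

theorem isEOPSet_fiberStars {S : Finset V} (hS : G.IsIndepSet S) {c : W} {N : Finset W}
    (hN : ∀ h ∈ N, H.Adj c h) (hNS : H.IsIndepSet N) :
    IsEOPSet (G □ H) (fiberStars S c N) := by
  refine ⟨?_, ?_⟩
  · simp only [Set.subset_def, fiberStars, coe_image, Set.mem_image]
    rintro _ ⟨⟨g, h⟩, hp, rfl⟩
    simp_all [boxProd_adj]
  · simp only [fiberStars, coe_image, Set.mem_image]
    rintro _ ⟨⟨g, h⟩, hp, rfl⟩ _ ⟨⟨g', h'⟩, hp', rfl⟩ hne x hx y hy hxy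
    simp only [Finset.coe_product, Set.mem_prod, Finset.mem_coe] at hp hp'
    rcases boxProd_adj.1 hxy with ⟨hadj, -⟩ | ⟨hadj, hfst⟩
    · have hg : G.Adj g g' := by
        rcases Sym2.mem_iff.1 hx with rfl | rfl <;> rcases Sym2.mem_iff.1 hy with rfl | rfl <;>
          exact hadj
      exact (hS hp.1 hp'.1 (G.ne_of_adj hg) hg).elim
    · rcases Sym2.mem_iff.1 hx with rfl | rfl <;> rcases Sym2.mem_iff.1 hy with rfl | rfl <;>
        simp only at hadj hfst
      · exact (H.irrefl hadj).elim
      · exact Or.inr (by rw [hfst])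
      · exact Or.inl (by rw [← hfst, Sym2.eq_swap])
      · exact (hNS hp.2 hp'.2 hadj.ne hadj).elim

theorem card_fiberStars (S : Finset V) {c : W} {N : Finset W} (hN : ∀ h ∈ N, H.Adj c h) :
    (fiberStars S c N).card = S.card * N.card := by
  rw [fiberStars, card_image_of_injOn, card_product]
  rintro ⟨g, h⟩ hp ⟨g', h'⟩ hp' heq
  simp only [Finset.coe_product, Set.mem_prod, Finset.mem_coe] at hp hp'
  rcases Sym2.eq_iff.1 heq with ⟨-, h⟩ | ⟨h, -⟩
  · exact h
  · simp only [Prod.mk.injEq] at h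
    exact ((hN h' hp'.2).ne h.2).elim

theorem card_add_card_le_of_forall_eq {α : Type*} [Fintype α] (hα : 2 ≤ Fintype.card α)
    {U W : Finset α} (h : ∀ a ∈ U, ∀ b ∈ W, a = b) : U.card + W.card ≤ Fintype.card α := by
  rcases U.eq_empty_or_nonempty with rfl | ⟨a, ha⟩
  · simpa using W.card_le_univ
  rcases W.eq_empty_or_nonempty with rfl | ⟨b, hb⟩
  · simpa using U.card_le_univ
  have hU : U.card ≤ 1 := card_le_one.2 fun a ha a' ha' => (h a ha b hb).trans (h a' ha' b hb).symm
  have hW : W.card ≤ 1 := card_le_one.2 fun b hb b' hb' => (h a ha b hb).symm.trans (h a ha b' hb')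
  omega

end General

section StarProduct

variable {r s : ℕ}

theorem starGraph_adj_iff {n : ℕ} {a b : Option (Fin n)} :
    (_root_.starGraph n).Adj a b ↔ a ≠ b ∧ (a = none ∨ b = none) := by
  simp [_root_.starGraph]

def starLeaves (n : ℕ) : Finset (Option (Fin n)) := univ.map Function.Embedding.some

theorem card_starLeaves (n : ℕ) : (starLeaves n).card = n := by
  simp [starLeaves]

theorem starGraph_adj_none_of_mem_starLeaves {n : ℕ} :
    ∀ b ∈ starLeaves n, (_root_.starGraph n).Adj none b := by
  simp [starLeaves, starGraph_adj_iff]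

theorem starGraph_isIndepSet_starLeaves (n : ℕ) :
    (_root_.starGraph n).IsIndepSet ↑(starLeaves n) := by
  intro a ha b hb _
  obtain ⟨i, -, rfl⟩ := mem_map.1 ha
  obtain ⟨j, -, rfl⟩ := mem_map.1 hb
  simp [starGraph_adj_iff]

abbrev starBox (r s : ℕ) : SimpleGraph (Option (Fin r) × Option (Fin s)) :=
  _root_.starGraph r □ _root_.starGraph s

-- The hub is `(none, none)`; `outerEdgeSnd i j` and `outerEdgeFst i j` end at `(some i, some j)`.

def hubEdgeFst (i : Fin r) : Sym2 (Option (Fin r) × Option (Fin s)) :=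
  s((none, none), (some i, none))

def hubEdgeSnd (j : Fin s) : Sym2 (Option (Fin r) × Option (Fin s)) :=
  s((none, none), (none, some j))

def outerEdgeSnd (i : Fin r) (j : Fin s) : Sym2 (Option (Fin r) × Option (Fin s)) :=
  s((some i, none), (some i, some j))

def outerEdgeFst (i : Fin r) (j : Fin s) : Sym2 (Option (Fin r) × Option (Fin s)) :=
  s((none, some j), (some i, some j))

theorem starBox_edge_cases {e : Sym2 (Option (Fin r) × Option (Fin s))}
    (he : e ∈ (starBox r s).edgeSet) :
    (∃ i, e = hubEdgeFst i) ∨ (∃ j, e = hubEdgeSnd j) ∨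
      (∃ i j, e = outerEdgeSnd i j) ∨ (∃ i j, e = outerEdgeFst i j) := by
  induction e using Sym2.ind with
  | _ x y =>
    obtain ⟨a, b⟩ := x
    obtain ⟨c, d⟩ := y
    rcases a with _ | a <;> rcases b with _ | b <;> rcases c with _ | c <;> rcases d with _ | d <;>
      simp_all [boxProd_adj, starGraph_adj_iff, hubEdgeFst, hubEdgeSnd, outerEdgeSnd, outerEdgeFst]

section Conflicts

variable {B : Set (Sym2 (Option (Fin r) × Option (Fin s)))} (hB : IsEOPSet (starBox r s) B)
include hB

theorem eq_of_hubEdgeFst_mem_of_outerEdgeSnd_mem {i i' : Fin r} {j : Fin s}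
    (h₁ : hubEdgeFst i ∈ B) (h₂ : outerEdgeSnd i' j ∈ B) : i = i' := by
  by_contra hne
  have := hB.eq_of_adj h₁ h₂ (x := (none, none)) (y := (some i', none)) ?_ ?_ ?_ ?_ ?_ <;>
    simp_all [boxProd_adj, starGraph_adj_iff, hubEdgeFst, outerEdgeSnd, eq_comm]

theorem outerEdgeFst_notMem_of_hubEdgeFst_mem {i i' : Fin r} {j : Fin s}
    (h₁ : hubEdgeFst i ∈ B) : outerEdgeFst i' j ∉ B := by
  intro h₂
  have := hB.eq_of_adj h₁ h₂ (x := (none, none)) (y := (none, some j)) ?_ ?_ ?_ ?_ ?_ <;>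
    simp_all [boxProd_adj, starGraph_adj_iff, hubEdgeFst, outerEdgeFst]

theorem eq_of_hubEdgeSnd_mem_of_outerEdgeFst_mem {j j' : Fin s} {i : Fin r}
    (h₁ : hubEdgeSnd j ∈ B) (h₂ : outerEdgeFst i j' ∈ B) : j = j' := by
  by_contra hne
  have := hB.eq_of_adj h₁ h₂ (x := (none, none)) (y := (none, some j')) ?_ ?_ ?_ ?_ ?_ <;>
    simp_all [boxProd_adj, starGraph_adj_iff, hubEdgeSnd, outerEdgeFst, eq_comm]

theorem outerEdgeSnd_notMem_of_hubEdgeSnd_mem {j j' : Fin s} {i : Fin r}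
    (h₁ : hubEdgeSnd j ∈ B) : outerEdgeSnd i j' ∉ B := by
  intro h₂
  have := hB.eq_of_adj h₁ h₂ (x := (none, none)) (y := (some i, none)) ?_ ?_ ?_ ?_ ?_ <;>
    simp_all [boxProd_adj, starGraph_adj_iff, hubEdgeSnd, outerEdgeSnd]

theorem eq_of_outerEdgeSnd_mem_of_outerEdgeFst_mem {i : Fin r} {j j' : Fin s}
    (h₁ : outerEdgeSnd i j ∈ B) (h₂ : outerEdgeFst i j' ∈ B) : j = j' := by
  by_contra hne
  have := hB.eq_of_adj h₁ h₂ (x := (some i, none)) (y := (some i, some j')) ?_ ?_ ?_ ?_ ?_ <;>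
    simp_all [boxProd_adj, starGraph_adj_iff, outerEdgeSnd, outerEdgeFst, eq_comm]

end Conflicts

variable {B : Finset (Sym2 (Option (Fin r) × Option (Fin s)))}

theorem card_le_of_forall_outerEdge_notMem (hB : IsEOPSet (starBox r s) B)
    (hout : ∀ i j, outerEdgeSnd i j ∉ B ∧ outerEdgeFst i j ∉ B) : B.card ≤ r + s := by
  have hcover : B ⊆ univ.image hubEdgeFst ∪ univ.image hubEdgeSnd := by
    intro e he
    rcases starBox_edge_cases (hB.1 he) with ⟨i, rfl⟩ | ⟨j, rfl⟩ | ⟨i, j, rfl⟩ | ⟨i, j, rfl⟩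
    · simp
    · simp
    · exact ((hout i j).1 he).elim
    · exact ((hout i j).2 he).elim
  calc B.card ≤ _ := card_le_card hcover
    _ ≤ (univ.image hubEdgeFst).card + (univ.image hubEdgeSnd).card := card_union_le _ _
    _ ≤ r + s := by
      simpa using add_le_add (card_image_le (s := univ) (f := hubEdgeFst (s := s)))
        (card_image_le (s := univ) (f := hubEdgeSnd (r := r)))

theorem card_le_of_hubEdgeFst_mem (hB : IsEOPSet (starBox r s) B) {i i' : Fin r} {j : Fin s}
    (hi : hubEdgeFst i ∈ B) (hout : outerEdgeSnd i' j ∈ B ∨ outerEdgeFst i' j ∈ B) :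
    B.card ≤ s + 1 := by
  have hij : outerEdgeSnd i j ∈ B := by
    rcases hout with h | h
    · rwa [eq_of_hubEdgeFst_mem_of_outerEdgeSnd_mem hB hi h]
    · exact (outerEdgeFst_notMem_of_hubEdgeFst_mem hB hi h).elim
  have hcover : B ⊆ insert (hubEdgeFst i) (univ.image (outerEdgeSnd i)) := by
    intro e he
    rcases starBox_edge_cases (hB.1 he) with ⟨i', rfl⟩ | ⟨j', rfl⟩ | ⟨i', j', rfl⟩ | ⟨i', j', rfl⟩
    · simp [eq_of_hubEdgeFst_mem_of_outerEdgeSnd_mem hB he hij]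
    · exact (outerEdgeSnd_notMem_of_hubEdgeSnd_mem hB he hij).elim
    · simp [← eq_of_hubEdgeFst_mem_of_outerEdgeSnd_mem hB hi he]
    · exact (outerEdgeFst_notMem_of_hubEdgeFst_mem hB hi he).elim
  calc B.card ≤ _ := card_le_card hcover
    _ ≤ (univ.image (outerEdgeSnd i)).card + 1 := card_insert_le _ _
    _ ≤ s + 1 := by simpa using card_image_le (s := univ) (f := outerEdgeSnd i)

theorem card_le_of_hubEdgeSnd_mem (hB : IsEOPSet (starBox r s) B) {j j' : Fin s} {i : Fin r}
    (hj : hubEdgeSnd j ∈ B) (hout : outerEdgeSnd i j' ∈ B ∨ outerEdgeFst i j' ∈ B) :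
    B.card ≤ r + 1 := by
  have hij : outerEdgeFst i j ∈ B := by
    rcases hout with h | h
    · exact (outerEdgeSnd_notMem_of_hubEdgeSnd_mem hB hj h).elim
    · rwa [eq_of_hubEdgeSnd_mem_of_outerEdgeFst_mem hB hj h]
  have hcover : B ⊆ insert (hubEdgeSnd j) (univ.image fun i => outerEdgeFst i j) := by
    intro e he
    rcases starBox_edge_cases (hB.1 he) with ⟨i', rfl⟩ | ⟨j', rfl⟩ | ⟨i', j', rfl⟩ | ⟨i', j', rfl⟩
    · exact (outerEdgeFst_notMem_of_hubEdgeFst_mem hB he hij).elim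
    · simp [eq_of_hubEdgeSnd_mem_of_outerEdgeFst_mem hB he hij]
    · exact (outerEdgeSnd_notMem_of_hubEdgeSnd_mem hB hj he).elim
    · simp [← eq_of_hubEdgeSnd_mem_of_outerEdgeFst_mem hB hj he]
  calc B.card ≤ _ := card_le_card hcover
    _ ≤ (univ.image fun i => outerEdgeFst i j).card + 1 := card_insert_le _ _
    _ ≤ r + 1 := by simpa using card_image_le (s := univ) (f := fun i => outerEdgeFst i j)

/-- Counted fiber by fiber over the leaves `some i`: an `outerEdgeSnd` and an `outerEdgeFst` edge
in the same fiber must share their column, so each fiber carries at most `max 2 s = s` edges. -/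
theorem card_le_of_forall_hubEdge_notMem (hs : 2 ≤ s) (hB : IsEOPSet (starBox r s) B)
    (hFst : ∀ i, hubEdgeFst i ∉ B) (hSnd : ∀ j, hubEdgeSnd j ∉ B) : B.card ≤ r * s := by
  let U i := univ.filter fun j => outerEdgeSnd i j ∈ B
  let W i := univ.filter fun j => outerEdgeFst i j ∈ B
  have hcover :
      B ⊆ univ.biUnion fun i => (U i).image (outerEdgeSnd i) ∪ (W i).image (outerEdgeFst i) := by
    intro e he
    rcases starBox_edge_cases (hB.1 he) with ⟨i, rfl⟩ | ⟨j, rfl⟩ | ⟨i, j, rfl⟩ | ⟨i, j, rfl⟩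
    · exact (hFst i he).elim
    · exact (hSnd j he).elim
    · exact mem_biUnion.2 ⟨i, mem_univ _, mem_union_left _ (mem_image_of_mem _ (by simpa [U]))⟩
    · exact mem_biUnion.2 ⟨i, mem_univ _, mem_union_right _ (mem_image_of_mem _ (by simpa [W]))⟩
  have hrow i : (U i).card + (W i).card ≤ s := by
    simpa using card_add_card_le_of_forall_eq (by simpa using hs) fun j hj j' hj' =>
      eq_of_outerEdgeSnd_mem_of_outerEdgeFst_mem hB (mem_filter.1 hj).2 (mem_filter.1 hj').2
  calc B.card ≤ _ := card_le_card hcover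
    _ ≤ ∑ i, ((U i).image (outerEdgeSnd i) ∪ (W i).image (outerEdgeFst i)).card := card_biUnion_le
    _ ≤ ∑ _i : Fin r, s := sum_le_sum fun i _ =>
      (card_union_le _ _).trans ((add_le_add card_image_le card_image_le).trans (hrow i))
    _ = r * s := by simp

theorem card_le_of_isEOPSet_starBox (hr : 2 ≤ r) (hs : 2 ≤ s) (hB : IsEOPSet (starBox r s) B) :
    B.card ≤ r * s := by
  by_cases hout : ∃ i j, outerEdgeSnd i j ∈ B ∨ outerEdgeFst i j ∈ B
  · obtain ⟨i, j, hij⟩ := hout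
    by_cases hFst : ∃ i, hubEdgeFst i ∈ B
    · obtain ⟨i₀, hi₀⟩ := hFst
      have := card_le_of_hubEdgeFst_mem hB hi₀ hij
      nlinarith
    by_cases hSnd : ∃ j, hubEdgeSnd j ∈ B
    · obtain ⟨j₀, hj₀⟩ := hSnd
      have := card_le_of_hubEdgeSnd_mem hB hj₀ hij
      nlinarith
    push Not at hFst hSnd
    exact card_le_of_forall_hubEdge_notMem hs hB hFst hSnd
  · push Not at hout
    have := card_le_of_forall_outerEdge_notMem hB hout
    nlinarith

end StarProduct

/-- For stars `K_{1,r}` and `K_{1,s}` with `s ≥ r ≥ 2`, `ρₑᵒ(K_{1,r} □ K_{1,s}) = r·s`. -/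
theorem stmt_15 (r s : ℕ) (h1 : 2 ≤ r) (h2 : r ≤ s) :
    eopNum ((_root_.starGraph r).boxProd (_root_.starGraph s)) = r * s := by
  have hB := isEOPSet_fiberStars (starGraph_isIndepSet_starLeaves r)
    starGraph_adj_none_of_mem_starLeaves (starGraph_isIndepSet_starLeaves s)
  have hcard : (fiberStars (starLeaves r) none (starLeaves s)).card = r * s := by
    rw [card_fiberStars _ starGraph_adj_none_of_mem_starLeaves, card_starLeaves, card_starLeaves]
  rw [← hcard]
  exact eopNum_eq_card hB fun B' hB' => hcard ▸ card_le_of_isEOPSet_starBox h1 (h1.trans h2) hB'
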